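/- Let (X_t)_{t≥1} and (Y_t)_{t≥1} be Markov chains with stationary transitions on finite state spaces I and J with |I| = n and |J| = m, defined on a common probability space, and assume that the pair process ((X_t, Y_t))_{t≥1} is also a Markov chain with stationary transitions on I × J. If for every t ≤ mn + 1 and all sequences w₁,…,w_t ∈ I and v₁,…,v_t ∈ J one has Pr(X₁=w₁,…,X_t=w_t, Y₁=v₁,…,Y_t=v_t) = Pr(X₁=w₁,…,X_t=w_t)·Pr(Y₁=v₁,…,Y_t=v_t), then this equality holds for every t ≥ 1, i.e., the two chains are fully independent. -/

import Mathlib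

open MeasureTheory Finset

/-! ### Auxiliary machinery: path weights -/

/-- Weight of a path `z 0, z 1, …, z t` with initial weights `a` and edge weights `A`. -/
noncomputable def mcF {Z : Type*} (a : Z → ENNReal) (A : Z → Z → ENNReal) (t : ℕ)
    (z : ℕ → Z) : ENNReal :=
  a (z 0) * ∏ s ∈ Finset.range t, A (z s) (z (s + 1))

/-- All factors of the path weight are nonzero. -/
def mcGood {Z : Type*} (a : Z → ENNReal) (A : Z → Z → ENNReal) (t : ℕ) (z : ℕ → Z) : Prop :=
  a (z 0) ≠ 0 ∧ ∀ s < t, A (z s) (z (s + 1)) ≠ 0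

lemma mcGood_of_ne_zero {Z : Type*} {a : Z → ENNReal} {A : Z → Z → ENNReal} {t : ℕ}
    {z : ℕ → Z} (h : mcF a A t z ≠ 0) : mcGood a A t z := by
  rw [mcF, mul_ne_zero_iff, Finset.prod_ne_zero_iff] at h
  exact ⟨h.1, fun s hs => h.2 s (Finset.mem_range.2 hs)⟩

lemma mcF_ne_zero_of_good {Z : Type*} {a : Z → ENNReal} {A : Z → Z → ENNReal} {t : ℕ}
    {z : ℕ → Z} (h : mcGood a A t z) : mcF a A t z ≠ 0 := by
  rw [mcF, mul_ne_zero_iff, Finset.prod_ne_zero_iff]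
  exact ⟨h.1, fun s hs => h.2 s (Finset.mem_range.1 hs)⟩

lemma mcF_succ {Z : Type*} (a : Z → ENNReal) (A : Z → Z → ENNReal) (t : ℕ) (z : ℕ → Z) :
    mcF a A (t + 1) z = mcF a A t z * A (z t) (z (t + 1)) := by
  rw [mcF, mcF, Finset.prod_range_succ, mul_assoc]

lemma mcF_congr {Z : Type*} (a : Z → ENNReal) (A : Z → Z → ENNReal) (t : ℕ) {z z' : ℕ → Z}
    (h : ∀ s ≤ t, z s = z' s) : mcF a A t z = mcF a A t z' := by
  unfold mcF
  rw [h 0 (Nat.zero_le _)]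
  congr 1
  refine Finset.prod_congr rfl fun s hs => ?_
  rw [Finset.mem_range] at hs
  rw [h s (le_of_lt hs), h (s + 1) hs]

/-- Splicing out a loop of a good path keeps it good with the same endpoint. -/
lemma mc_splice {Z : Type*} {a : Z → ENNReal} {A : Z → Z → ENNReal} {t u1 u2 : ℕ}
    {z : ℕ → Z} (hz : mcGood a A t z) (h12 : u1 < u2) (h2t : u2 ≤ t) (heq : z u1 = z u2) :
    mcGood a A (t - (u2 - u1)) (fun s => if s ≤ u1 then z s else z (s + (u2 - u1))) ∧
      (fun s => if s ≤ u1 then z s else z (s + (u2 - u1))) (t - (u2 - u1)) = z t := by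
  have hdt : u2 - u1 ≤ t := by omega
  refine ⟨⟨?_, ?_⟩, ?_⟩
  · simpa using hz.1
  · intro s hs
    by_cases h1 : s + 1 ≤ u1
    · simp only [show s ≤ u1 by omega, h1, if_pos]
      exact hz.2 s (by omega)
    · by_cases h2 : s ≤ u1
      · -- s = u1, junction
        have hs1 : s = u1 := by omega
        beta_reduce
        rw [if_pos h2, if_neg h1, hs1, heq, show u1 + 1 + (u2 - u1) = u2 + 1 by omega]
        exact hz.2 u2 (by omega)
      · beta_reduce
        rw [if_neg h2, if_neg (by omega : ¬ s + 1 ≤ u1),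
          show s + 1 + (u2 - u1) = s + (u2 - u1) + 1 by omega]
        exact hz.2 (s + (u2 - u1)) (by omega)
  · by_cases h : t - (u2 - u1) ≤ u1
    · have h1 : t - (u2 - u1) = u1 := by omega
      have h2 : u2 = t := by omega
      beta_reduce
      rw [if_pos h, h1, heq, h2]
    · beta_reduce
      rw [if_neg h]
      congr 1
      omega

/-- Loop-erasure / pigeonhole: any good path can be shortcut to one of length `< card Z`
with the same endpoint. -/
lemma mc_shortcut {Z : Type*} [Fintype Z] (a : Z → ENNReal) (A : Z → Z → ENNReal) :
    ∀ (t : ℕ) (z : ℕ → Z), mcGood a A t z →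
      ∃ (t' : ℕ) (z' : ℕ → Z), t' + 1 ≤ Fintype.card Z ∧ mcGood a A t' z' ∧ z' t' = z t := by
  intro t
  induction t using Nat.strong_induction_on with
  | _ t ih =>
    intro z hz
    by_cases hle : t + 1 ≤ Fintype.card Z
    · exact ⟨t, z, hle, hz, rfl⟩
    · have hcard : Fintype.card Z < Fintype.card (Fin (t + 1)) := by
        simp only [Fintype.card_fin]; omega
      obtain ⟨s1, s2, hne, heq⟩ := Fintype.exists_ne_map_eq_of_card_lt
        (fun s : Fin (t + 1) => z s) hcard
      have key : ∀ u1 u2 : ℕ, u1 < u2 → u2 ≤ t → z u1 = z u2 →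
          ∃ (t' : ℕ) (z' : ℕ → Z), t' + 1 ≤ Fintype.card Z ∧ mcGood a A t' z' ∧ z' t' = z t := by
        intro u1 u2 h12 h2t hzeq
        obtain ⟨hg, he⟩ := mc_splice hz h12 h2t hzeq
        obtain ⟨t', z', h1, h2, h3⟩ := ih (t - (u2 - u1)) (by omega) _ hg
        exact ⟨t', z', h1, h2, h3.trans he⟩
      have hne' : (s1 : ℕ) ≠ (s2 : ℕ) := fun h => hne (Fin.ext h)
      rcases lt_or_gt_of_ne hne' with hlt | hlt
      · exact key s1 s2 hlt (by omega) heq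
      · exact key s2 s1 hlt (by omega) heq.symm

/-- Abstract main lemma: if two path-weight systems agree up to length `N ≥ card Z`, and the
first one has finite weights, they agree for all lengths. -/
lemma mc_main {Z : Type*} [Fintype Z] {a b : Z → ENNReal} {A B : Z → Z → ENNReal} {N : ℕ}
    (hcard : Fintype.card Z ≤ N)
    (hfin : ∀ (t : ℕ) (z : ℕ → Z), mcF a A t z ≠ ⊤)
    (H : ∀ t ≤ N, ∀ z : ℕ → Z, mcF a A t z = mcF b B t z) :
    ∀ (t : ℕ) (z : ℕ → Z), mcF a A t z = mcF b B t z := by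
  have L2 : ∀ ζ : Z, (∃ (t : ℕ) (z : ℕ → Z), mcGood a A t z ∧ z t = ζ) →
      ∀ x : Z, A ζ x = B ζ x := by
    rintro ζ ⟨t, z, hg, hend⟩ x
    obtain ⟨t', z', hle, hg', hend'⟩ := mc_shortcut a A t z hg
    have hend'' : z' t' = ζ := hend'.trans hend
    set ze : ℕ → Z := fun s => if s ≤ t' then z' s else x with hze
    have hagree : ∀ s ≤ t', ze s = z' s := fun s hs => if_pos hs
    have hzet : ze t' = ζ := by rw [hagree t' le_rfl, hend'']
    have hzet1 : ze (t' + 1) = x := if_neg (by omega)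
    have h1 := H (t' + 1) (le_trans hle hcard) ze
    rw [mcF_succ, mcF_succ, hzet, hzet1,
      mcF_congr a A t' hagree, mcF_congr b B t' hagree,
      ← H t' (le_trans (by omega) hcard) z'] at h1
    exact (ENNReal.mul_right_inj (mcF_ne_zero_of_good hg') (hfin t' z')).1 h1
  intro t
  induction t with
  | zero => exact H 0 (Nat.zero_le _)
  | succ t ih =>
    intro z
    rw [mcF_succ, mcF_succ]
    by_cases h0 : mcF a A t z = 0
    · rw [← ih z, h0, zero_mul, zero_mul]
    · rw [ih z, L2 (z t) ⟨t, z, mcGood_of_ne_zero h0, rfl⟩ (z (t + 1))]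

/-- `X` (indexed by `ℕ`, representing times `1, 2, …`) is a Markov chain with
stationary transitions, initial distribution `ν` and transition matrix `p`:
for every `t ≥ 1` and all states `i₁, …, i_t`,
`Pr(X₁ = i₁, …, X_t = i_t) = ν i₁ · p i₁ i₂ · … · p i_{t-1} i_t`. -/
def IsMarkovChain {W I : Type*} [MeasurableSpace W] (P : Measure W)
    (X : ℕ → W → I) (ν : I → ENNReal) (p : I → I → ENNReal) : Prop :=
  ∀ (t : ℕ) (i : Fin (t + 1) → I),
    P {w | ∀ s : Fin (t + 1), X s w = i s} =
      ν (i 0) * ∏ s : Fin t, p (i s.castSucc) (i s.succ)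

lemma isMarkovChain_prob {W K : Type*} [MeasurableSpace W] {P : Measure W} {M : ℕ → W → K}
    {ν : K → ENNReal} {p : K → K → ENNReal} (hM : IsMarkovChain P M ν p) (t : ℕ) (zn : ℕ → K) :
    P {ω | ∀ s : Fin (t + 1), M s ω = zn s} = mcF ν p t zn := by
  have h := hM t (fun s : Fin (t + 1) => zn ↑s)
  rw [h, mcF, ← Fin.prod_univ_eq_prod_range (fun s => p (zn s) (zn (s + 1))) t]
  simp [Fin.coe_castSucc, Fin.val_succ]

/-- Let `X` and `Y` be Markov chains with stationary transitions on
finite state spaces `I`, `J` with `|I| = n`, `|J| = m`, on a common probability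
space, and assume the pair process `(X_t, Y_t)` is also a Markov chain with
stationary transitions. If the chains are independent until time `mn + 1`, i.e.
the product equality of joint probabilities holds for all `t ≤ mn + 1`, then it
holds for every `t ≥ 1`: the chains are fully independent. -/
theorem markov_chains_indep_of_indep_up_to_mn_succ
    {W I J : Type*} [MeasurableSpace W] [Fintype I] [Fintype J]
    (n m : ℕ) (hI : Fintype.card I = n) (hJ : Fintype.card J = m)
    (P : Measure W) [IsProbabilityMeasure P]
    (X : ℕ → W → I) (Y : ℕ → W → J)
    (νX : I → ENNReal) (pX : I → I → ENNReal)
    (νY : J → ENNReal) (pY : J → J → ENNReal)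
    (hνX : ∑ i, νX i = 1) (hpX : ∀ i, ∑ i', pX i i' = 1)
    (hνY : ∑ j, νY j = 1) (hpY : ∀ j, ∑ j', pY j j' = 1)
    (hX : IsMarkovChain P X νX pX) (hY : IsMarkovChain P Y νY pY)
    (νZ : I × J → ENNReal) (pZ : I × J → I × J → ENNReal)
    (hνZ : ∑ z, νZ z = 1) (hpZ : ∀ z, ∑ z', pZ z z' = 1)
    (hZ : IsMarkovChain P (fun t ω => (X t ω, Y t ω)) νZ pZ)
    (hindep : ∀ t : ℕ, t + 1 ≤ m * n + 1 →
      ∀ (w : Fin (t + 1) → I) (v : Fin (t + 1) → J),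
        P {ω | (∀ s : Fin (t + 1), X s ω = w s) ∧ (∀ s : Fin (t + 1), Y s ω = v s)} =
          P {ω | ∀ s : Fin (t + 1), X s ω = w s} *
            P {ω | ∀ s : Fin (t + 1), Y s ω = v s}) :
    ∀ (t : ℕ) (w : Fin (t + 1) → I) (v : Fin (t + 1) → J),
      P {ω | (∀ s : Fin (t + 1), X s ω = w s) ∧ (∀ s : Fin (t + 1), Y s ω = v s)} =
        P {ω | ∀ s : Fin (t + 1), X s ω = w s} *
          P {ω | ∀ s : Fin (t + 1), Y s ω = v s} := by
  -- probability identities in ℕ-indexed form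
  have PX : ∀ (t : ℕ) (wn : ℕ → I),
      P {ω | ∀ s : Fin (t + 1), X s ω = wn ↑s} = mcF νX pX t wn :=
    fun t wn => isMarkovChain_prob hX t wn
  have PY : ∀ (t : ℕ) (vn : ℕ → J),
      P {ω | ∀ s : Fin (t + 1), Y s ω = vn ↑s} = mcF νY pY t vn :=
    fun t vn => isMarkovChain_prob hY t vn
  have PZ : ∀ (t : ℕ) (zn : ℕ → I × J),
      P {ω | ∀ s : Fin (t + 1), (X s ω, Y s ω) = zn ↑s} = mcF νZ pZ t zn :=
    fun t zn => isMarkovChain_prob hZ t zn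
  -- the product system
  set bfun : I × J → ENNReal := fun z => νX z.1 * νY z.2 with hbfun
  set Bfun : I × J → I × J → ENNReal := fun z z' => pX z.1 z'.1 * pY z.2 z'.2 with hBfun
  have prodF : ∀ (t : ℕ) (z : ℕ → I × J),
      mcF bfun Bfun t z = mcF νX pX t (fun s => (z s).1) * mcF νY pY t (fun s => (z s).2) := by
    intro t z
    unfold mcF
    rw [hbfun, hBfun]
    beta_reduce
    rw [Finset.prod_mul_distrib]
    ring
  -- the pair set identity
  have pairSet : ∀ (t : ℕ) (zn : ℕ → I × J),
      {ω | (∀ s : Fin (t + 1), X s ω = (zn ↑s).1) ∧ (∀ s : Fin (t + 1), Y s ω = (zn ↑s).2)}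
        = {ω | ∀ s : Fin (t + 1), (X s ω, Y s ω) = zn ↑s} := by
    intro t zn
    ext ω
    simp only [Set.mem_setOf_eq, ← forall_and, Prod.ext_iff]
  -- independence up to time m*n in product form
  have H : ∀ t ≤ m * n, ∀ z : ℕ → I × J, mcF νZ pZ t z = mcF bfun Bfun t z := by
    intro t ht z
    have h := hindep t (by omega) (fun s => (z ↑s).1) (fun s => (z ↑s).2)
    beta_reduce at h
    rw [pairSet t z, PZ t z] at h
    have hx := PX t (fun s => (z s).1)
    have hy := PY t (fun s => (z s).2)
    beta_reduce at hx hy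
    rw [hx, hy] at h
    rw [prodF t z]
    exact h
  -- finiteness
  have hfin : ∀ (t : ℕ) (z : ℕ → I × J), mcF νZ pZ t z ≠ ⊤ := by
    intro t z
    rw [← PZ t z]
    exact measure_ne_top P _
  have hcard : Fintype.card (I × J) ≤ m * n := by
    rw [Fintype.card_prod, hI, hJ, Nat.mul_comm]
  have main := mc_main hcard hfin H
  -- conclude
  intro t w v
  set wn : ℕ → I := fun s => if h : s < t + 1 then w ⟨s, h⟩ else w 0 with hwn
  set vn : ℕ → J := fun s => if h : s < t + 1 then v ⟨s, h⟩ else v 0 with hvn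
  set zn : ℕ → I × J := fun s => (wn s, vn s) with hzn
  have hw : ∀ s : Fin (t + 1), wn ↑s = w s := by
    intro s; simp [hwn, s.isLt]; exact fun h => absurd s.isLt (by omega)
  have hv : ∀ s : Fin (t + 1), vn ↑s = v s := by
    intro s; simp [hvn, s.isLt]; exact fun h => absurd s.isLt (by omega)
  have E1 : {ω | ∀ s : Fin (t + 1), X s ω = w s}
      = {ω | ∀ s : Fin (t + 1), X s ω = wn ↑s} := by
    ext ω
    simp only [Set.mem_setOf_eq]
    exact forall_congr' fun s => by rw [hw s]
  have E2 : {ω | ∀ s : Fin (t + 1), Y s ω = v s}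
      = {ω | ∀ s : Fin (t + 1), Y s ω = vn ↑s} := by
    ext ω
    simp only [Set.mem_setOf_eq]
    exact forall_congr' fun s => by rw [hv s]
  have E3 : {ω | (∀ s : Fin (t + 1), X s ω = w s) ∧ (∀ s : Fin (t + 1), Y s ω = v s)}
      = {ω | ∀ s : Fin (t + 1), (X s ω, Y s ω) = zn ↑s} := by
    rw [← pairSet t zn]
    ext ω
    simp only [Set.mem_setOf_eq]
    refine and_congr (forall_congr' fun s => ?_) (forall_congr' fun s => ?_)
    · constructor
      · intro h; rw [← hw s] at h; exact h
      · intro h; rw [← hw s]; exact h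
    · constructor
      · intro h; rw [← hv s] at h; exact h
      · intro h; rw [← hv s]; exact h
  rw [E1, E2, E3, PZ t zn, PX t wn, PY t vn, main t zn, prodF t zn]
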